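/- arXiv:2112.10233 — 6 statements merged into one kernel-verified Lean document; each statement's English description precedes it below -/
import Mathlib

section
/- Suppose z : [0,∞) → ℝ is differentiable and satisfies z'(t) = -z(t)³(θ_1 z(t) - θ_2)e^{-θ_3 z(t)} for all t ≥ 0 (the case τ = 0). Define ξ_1(t) = -∫₀ᵗ z(s)⁴ ds and ξ_2(t) = ∫₀ᵗ z(s)³ ds. Then for all t ≥ 0: e^{θ_3 z(0)} z'(t) + θ_1 θ_3 ξ_1(t) z'(t) + θ_2 θ_3 ξ_2(t) z'(t) + θ_1 z(t)⁴ - θ_2 z(t)³ = 0. -/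
open Real Set intervalIntegral

/-! Along a solution, `exp (θ3 * z)` has derivative `θ3 * (θ2 * z³ - θ1 * z⁴)`, so
integrating gives the first integral
`exp (θ3 * z t) = exp (θ3 * z 0) + θ1 θ3 ξ1 t + θ2 θ3 ξ2 t`.
Multiplying the ODE by `exp (θ3 * z t)` and substituting this first integral yields the
identity. -/

theorem hasDerivAt_exp_const_mul_of_hasDerivAt {c t : ℝ} {z f : ℝ → ℝ}
    (hz : HasDerivAt z (f t * exp (-c * z t)) t) :
    HasDerivAt (fun u => exp (c * z u)) (c * f t) t := by
  refine ((hasDerivAt_exp (c * z t)).comp t (hz.const_mul c)).congr_deriv ?_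
  have hinv : exp (c * z t) * exp (-c * z t) = 1 := by rw [← exp_add]; simp
  linear_combination c * f t * hinv

theorem exp_const_mul_eq_add_integral {c t : ℝ} {z f : ℝ → ℝ}
    (hz : ∀ s ∈ uIcc 0 t, HasDerivAt z (f s * exp (-c * z s)) s)
    (hf : IntervalIntegrable f MeasureTheory.volume 0 t) :
    exp (c * z t) = exp (c * z 0) + c * ∫ s in (0:ℝ)..t, f s := by
  have hFTC := integral_eq_sub_of_hasDerivAt
    (fun s hs => hasDerivAt_exp_const_mul_of_hasDerivAt (hz s hs)) (hf.const_mul c)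
  rw [integral_const_mul] at hFTC
  linarith

theorem exp_mul_eq_first_integral {θ1 θ2 θ3 t : ℝ} {z : ℝ → ℝ} (ht : 0 ≤ t)
    (hz : ∀ s ≥ 0, HasDerivAt z (-(z s) ^ 3 * (θ1 * z s - θ2) * exp (-θ3 * z s)) s) :
    exp (θ3 * z t) = exp (θ3 * z 0) - θ1 * θ3 * (∫ s in (0:ℝ)..t, z s ^ 4)
      + θ2 * θ3 * ∫ s in (0:ℝ)..t, z s ^ 3 := by
  have hz' : ∀ s ∈ uIcc 0 t,
      HasDerivAt z (-(z s) ^ 3 * (θ1 * z s - θ2) * exp (-θ3 * z s)) s :=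
    fun s hs => hz s (by rw [uIcc_of_le ht] at hs; exact hs.1)
  have hcont : ContinuousOn z (uIcc 0 t) := fun s hs =>
    (hz' s hs).continuousAt.continuousWithinAt
  have hz4 : IntervalIntegrable (fun s => z s ^ 4) MeasureTheory.volume 0 t :=
    (hcont.pow 4).intervalIntegrable
  have hz3 : IntervalIntegrable (fun s => z s ^ 3) MeasureTheory.volume 0 t :=
    (hcont.pow 3).intervalIntegrable
  have hsplit : (∫ s in (0:ℝ)..t, -(z s) ^ 3 * (θ1 * z s - θ2))
      = -θ1 * (∫ s in (0:ℝ)..t, z s ^ 4) + θ2 * ∫ s in (0:ℝ)..t, z s ^ 3 := by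
    rw [← integral_const_mul, ← integral_const_mul,
      ← integral_add (hz4.const_mul _) (hz3.const_mul _)]
    exact integral_congr fun s _ => by ring
  have hf : IntervalIntegrable (fun s => -(z s) ^ 3 * (θ1 * z s - θ2)) MeasureTheory.volume 0 t :=
    ((hcont.pow 3).neg.mul
      ((continuousOn_const.mul hcont).sub continuousOn_const)).intervalIntegrable
  rw [exp_const_mul_eq_add_integral hz' hf, hsplit]
  ring

open Real in
theorem key_identity_general (θ1 θ2 θ3 : ℝ) (z : ℝ → ℝ)
    (hz : ∀ t ≥ 0, HasDerivAt z (-(z t) ^ 3 * (θ1 * z t - θ2) * exp (-θ3 * z t)) t)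
    (ξ1 ξ2 : ℝ → ℝ)
    (hξ1 : ∀ t, ξ1 t = -∫ s in (0:ℝ)..t, (z s) ^ 4)
    (hξ2 : ∀ t, ξ2 t = ∫ s in (0:ℝ)..t, (z s) ^ 3) :
    ∀ t ≥ 0,
      exp (θ3 * z 0) * deriv z t + θ1 * θ3 * ξ1 t * deriv z t
        + θ2 * θ3 * ξ2 t * deriv z t + θ1 * (z t) ^ 4 - θ2 * (z t) ^ 3 = 0 := by
  intro t ht
  have hfirst := exp_mul_eq_first_integral ht hz
  have hinv : exp (θ3 * z t) * exp (-θ3 * z t) = 1 := by rw [← exp_add]; simp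
  rw [(hz t ht).deriv, hξ1, hξ2]
  linear_combination (-(z t) ^ 3 * (θ1 * z t - θ2) * exp (-θ3 * z t)) * hfirst.symm
    + (-(z t) ^ 3 * (θ1 * z t - θ2)) * hinv

open Real in
theorem key_identity (θ1 θ2 θ3 : ℝ) (hθ3 : 0 < θ3) (z : ℝ → ℝ)
    (hz : ∀ t ≥ 0, HasDerivAt z (-(z t) ^ 3 * (θ1 * z t - θ2) * exp (-θ3 * z t)) t)
    (ξ1 ξ2 : ℝ → ℝ)
    (hξ1 : ∀ t, ξ1 t = -∫ s in (0:ℝ)..t, (z s) ^ 4)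
    (hξ2 : ∀ t, ξ2 t = ∫ s in (0:ℝ)..t, (z s) ^ 3) :
    ∀ t ≥ 0,
      exp (θ3 * z 0) * deriv z t + θ1 * θ3 * ξ1 t * deriv z t
        + θ2 * θ3 * ξ2 t * deriv z t + θ1 * (z t) ^ 4 - θ2 * (z t) ^ 3 = 0 :=
  key_identity_general θ1 θ2 θ3 z hz ξ1 ξ2 hξ1 hξ2
end

section
/- Suppose z : [0,∞) → ℝ is differentiable, z(t) > 0 for all t, and z' = -z³(θ_1 z - θ_2)e^{-θ_3 z}. Let ξ_3(t) = -1/(2 z(t)²). Then ξ_3'(t) = z'(t)/z(t)³, and e^{θ_3 z(0)} ξ_3'(t) + θ_1 θ_3 ξ_1(t) ξ_3'(t) + θ_2 θ_3 ξ_2(t) ξ_3'(t) + θ_1 z(t) - θ_2 = 0 for all t, where ξ_1(t) = -∫₀ᵗ z⁴ and ξ_2(t) = ∫₀ᵗ z³. -/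
/-!
Along solutions of the ODE, `d/dt exp (θ3 z) = θ3 z³ (θ2 - θ1 z)`: the exponential factor of the
vector field cancels. Integrating from `0` gives the first integral
`exp (θ3 z t) = exp (θ3 z 0) + θ1 θ3 ξ1 t + θ2 θ3 ξ2 t`, and multiplying it by
`ξ3' = z' / z³ = -(θ1 z - θ2) exp (-θ3 z)` yields the identity.
-/

open Real

theorem exp_mul_mul_exp_neg_mul (a x : ℝ) : exp (a * x) * exp (-a * x) = 1 := by
  rw [← exp_add, neg_mul, add_neg_cancel, exp_zero]

theorem HasDerivAt.neg_one_div_two_mul_sq {f : ℝ → ℝ} {f' t : ℝ} (hf : HasDerivAt f f' t)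
    (ht : f t ≠ 0) : HasDerivAt (fun s => -(1 / (2 * f s ^ 2))) (f' / f t ^ 3) t := by
  have h := (((hf.fun_pow 2).const_mul 2).fun_inv (by simp [ht])).fun_neg
  simp only [one_div]
  refine h.congr_deriv ?_
  field_simp
  ring

section FirstIntegral

variable {θ1 θ2 θ3 : ℝ} {z : ℝ → ℝ}
  (hz : ∀ t ≥ 0, HasDerivAt z (-(z t) ^ 3 * (θ1 * z t - θ2) * exp (-θ3 * z t)) t)
include hz

theorem hasDerivAt_exp_const_mul_of_ode {t : ℝ} (ht : 0 ≤ t) :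
    HasDerivAt (fun s => exp (θ3 * z s)) (θ3 * (θ2 * z t ^ 3 - θ1 * z t ^ 4)) t := by
  convert ((hz t ht).const_mul θ3).exp using 1
  linear_combination (θ3 * z t ^ 3 * (θ1 * z t - θ2)) * exp_mul_mul_exp_neg_mul θ3 (z t)

theorem exp_const_mul_eq_integral_of_ode {t : ℝ} (ht : 0 ≤ t) :
    exp (θ3 * z t) = exp (θ3 * z 0) - θ1 * θ3 * (∫ s in (0:ℝ)..t, z s ^ 4)
      + θ2 * θ3 * ∫ s in (0:ℝ)..t, z s ^ 3 := by
  have hnonneg : ∀ x ∈ Set.uIcc 0 t, 0 ≤ x := fun x hx => (Set.uIcc_of_le ht ▸ hx).1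
  have hzc : ContinuousOn z (Set.uIcc 0 t) := fun x hx =>
    (hz x (hnonneg x hx)).continuousAt.continuousWithinAt
  have hint : ∀ n : ℕ, IntervalIntegrable (fun s => z s ^ n) MeasureTheory.volume 0 t :=
    fun n => (hzc.pow n).intervalIntegrable
  have hftc := intervalIntegral.integral_eq_sub_of_hasDerivAt
    (fun x hx => hasDerivAt_exp_const_mul_of_ode hz (hnonneg x hx))
    ((((hint 3).const_mul θ2).sub ((hint 4).const_mul θ1)).const_mul θ3)
  rw [intervalIntegral.integral_const_mul, intervalIntegral.integral_sub
    ((hint 3).const_mul θ2) ((hint 4).const_mul θ1), intervalIntegral.integral_const_mul,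
    intervalIntegral.integral_const_mul] at hftc
  linear_combination -hftc

end FirstIntegral

open Real in
theorem xi3_identity (θ1 θ2 θ3 : ℝ) (z : ℝ → ℝ) (hzpos : ∀ t ≥ 0, 0 < z t)
    (hz : ∀ t ≥ 0, HasDerivAt z (-(z t) ^ 3 * (θ1 * z t - θ2) * exp (-θ3 * z t)) t)
    (ξ1 ξ2 ξ3 : ℝ → ℝ)
    (hξ1 : ∀ t, ξ1 t = -∫ s in (0:ℝ)..t, (z s) ^ 4)
    (hξ2 : ∀ t, ξ2 t = ∫ s in (0:ℝ)..t, (z s) ^ 3)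
    (hξ3 : ∀ t, ξ3 t = -(1 / (2 * (z t) ^ 2))) :
    (∀ t ≥ 0, deriv ξ3 t = deriv z t / (z t) ^ 3) ∧
    ∀ t ≥ 0,
      exp (θ3 * z 0) * deriv ξ3 t + θ1 * θ3 * ξ1 t * deriv ξ3 t
        + θ2 * θ3 * ξ2 t * deriv ξ3 t + θ1 * z t - θ2 = 0 := by
  have hderiv : ∀ t ≥ 0, deriv ξ3 t = deriv z t / z t ^ 3 := fun t ht => by
    rw [funext hξ3, ((hz t ht).neg_one_div_two_mul_sq (hzpos t ht).ne').deriv, (hz t ht).deriv]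
  refine ⟨hderiv, fun t ht => ?_⟩
  have hξ3' : deriv ξ3 t = -(θ1 * z t - θ2) * exp (-θ3 * z t) := by
    rw [hderiv t ht, (hz t ht).deriv]
    field_simp [(hzpos t ht).ne']
  rw [hξ3', hξ1, hξ2]
  linear_combination (-(θ1 * z t - θ2) * exp (-θ3 * z t)) *
    (exp_const_mul_eq_integral_of_ode hz ht).symm - (θ1 * z t - θ2) * exp_mul_mul_exp_neg_mul θ3 (z t)
end

section
/- Let W : ℝ³ → ℝ⁴ be W(η) = (η_1, η_2, η_1 η_3, η_2 η_3), and let T be the 3×4 matrix with rows (α,0,0,0), (0,α,0,0), (0,0,0,1). For any η with η_2 > 0 and any α > η_3²/(4η_2), the symmetric 3×3 matrix T·∇W(η) + (∇W(η))ᵀ·Tᵀ is positive definite, where ∇W(η) is the 4×3 Jacobian of W at η. -/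
/-!
`T ∇W(η) + (T ∇W(η))ᵀ` is the symmetric matrix `!![2α, 0, 0; 0, 2α, η₃; 0, η₃, 2η₂]`: a positive
diagonal entry decoupled from a `2 × 2` block whose determinant `4αη₂ - η₃²` is positive exactly
when `α > η₃² / (4η₂)`. Such a block has a positive definite quadratic form by completing the
square: `d (b x² + 2cxy + dy²) = (cx + dy)² + (bd - c²) x²`.
-/

open Matrix

lemma binary_quadratic_pos {b c d x y : ℝ} (hd : 0 < d) (hdisc : c ^ 2 < b * d)
    (hxy : x ≠ 0 ∨ y ≠ 0) : 0 < b * x ^ 2 + 2 * c * x * y + d * y ^ 2 := by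
  have hsquare : d * (b * x ^ 2 + 2 * c * x * y + d * y ^ 2)
      = (c * x + d * y) ^ 2 + (b * d - c ^ 2) * x ^ 2 := by ring
  refine pos_of_mul_pos_right (hsquare ▸ ?_) hd.le
  rcases eq_or_ne x 0 with rfl | hx
  · have hy : y ≠ 0 := hxy.resolve_left (not_not.mpr rfl)
    simp only [mul_zero, zero_add, ne_eq, OfNat.ofNat_ne_zero, not_false_eq_true, zero_pow,
      add_zero]
    positivity
  · have : 0 < b * d - c ^ 2 := sub_pos.mpr hdisc
    positivity

lemma dotProduct_mulVec_blockDiag_binary (a b c d : ℝ) (x : Fin 3 → ℝ) :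
    star x ⬝ᵥ (!![a, 0, 0; 0, b, c; 0, c, d] *ᵥ x)
      = a * x 0 ^ 2 + (b * x 1 ^ 2 + 2 * c * x 1 * x 2 + d * x 2 ^ 2) := by
  simp only [dotProduct, Pi.star_apply, star_trivial, mulVec, of_apply, cons_val',
    cons_val_fin_one, Fin.sum_univ_three, cons_val_zero, cons_val_one, cons_val, zero_mul,
    add_zero, zero_add]
  ring

lemma posDef_blockDiag_binary {a b c d : ℝ} (ha : 0 < a) (hd : 0 < d) (hdisc : c ^ 2 < b * d) :
    (!![a, 0, 0; 0, b, c; 0, c, d] : Matrix (Fin 3) (Fin 3) ℝ).PosDef := by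
  refine posDef_iff_dotProduct_mulVec.mpr ⟨?_, fun x hx => ?_⟩
  · ext i j
    fin_cases i <;> fin_cases j <;> rfl
  rw [dotProduct_mulVec_blockDiag_binary]
  by_cases h12 : x 1 = 0 ∧ x 2 = 0
  · have h0 : x 0 ≠ 0 := fun h0 => hx (by ext i; fin_cases i <;> simp [h0, h12.1, h12.2])
    simp only [h12.1, h12.2, ne_eq, OfNat.ofNat_ne_zero, not_false_eq_true, zero_pow, mul_zero,
      add_zero]
    positivity
  · have := binary_quadratic_pos hd hdisc (not_and_or.mp h12)
    positivity

lemma symmetrized_mul_jacobian (α u v w : ℝ) :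
    (!![α, 0, 0, 0; 0, α, 0, 0; 0, 0, 0, 1] * !![1, 0, 0; 0, 1, 0; u, 0, v; 0, u, w]
      + (!![α, 0, 0, 0; 0, α, 0, 0; 0, 0, 0, 1] * !![1, 0, 0; 0, 1, 0; u, 0, v; 0, u, w])ᵀ
      : Matrix (Fin 3) (Fin 3) ℝ) = !![2 * α, 0, 0; 0, 2 * α, u; 0, u, 2 * w] := by
  ext i j
  fin_cases i <;> fin_cases j <;> simp <;> ring

theorem lmi_posdef (α : ℝ) (η : Fin 3 → ℝ) (hη2 : 0 < η 1)
    (hα : α > (η 2) ^ 2 / (4 * η 1))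
    (T : Matrix (Fin 3) (Fin 4) ℝ)
    (hT : T = !![α, 0, 0, 0; 0, α, 0, 0; 0, 0, 0, 1])
    (Jac : Matrix (Fin 4) (Fin 3) ℝ)
    (hJac : Jac = !![1, 0, 0; 0, 1, 0; η 2, 0, η 0; 0, η 2, η 1]) :
    (T * Jac + (T * Jac)ᵀ).PosDef := by
  subst hT hJac
  rw [symmetrized_mul_jacobian]
  have hdisc : η 2 ^ 2 < 2 * α * (2 * η 1) := by
    have := (div_lt_iff₀ (by positivity : (0 : ℝ) < 4 * η 1)).mp hα
    linarith
  have hα0 : 0 < α := (div_nonneg (sq_nonneg _) (by positivity)).trans_lt hα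
  exact posDef_blockDiag_binary (by positivity) (by positivity) hdisc
end

section
/- For W(η) = (η_1, η_2, η_1 η_3, η_2 η_3) and T the matrix with rows (α,0,0,0),(0,α,0,0),(0,0,0,1): for all a, b in the set S = {η ∈ ℝ³ : η_2 ≥ m} with m > 0 and |η_3| ≤ M, if α > M²/(4m) then there exists ρ > 0 with (a−b)ᵀ(T W(a) − T W(b)) ≥ ρ |a−b|². -/
open Matrix

theorem monotone_on_region (α m M : ℝ) (hm : 0 < m)
    (W : (Fin 3 → ℝ) → Fin 4 → ℝ)
    (hW : ∀ η, W η = ![η 0, η 1, η 0 * η 2, η 1 * η 2])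
    (T : Matrix (Fin 3) (Fin 4) ℝ)
    (hT : T = !![α, 0, 0, 0; 0, α, 0, 0; 0, 0, 0, 1])
    (S : Set (Fin 3 → ℝ))
    (hS : S = {η | m ≤ η 1 ∧ |η 2| ≤ M})
    (hα : α > M ^ 2 / (4 * m)) :
    ∃ ρ > 0, ∀ a ∈ S, ∀ b ∈ S,
      (a - b) ⬝ᵥ (T.mulVec (W a) - T.mulVec (W b)) ≥ ρ * ((a - b) ⬝ᵥ (a - b)) := by
  subst hT hS
  have hα0 : 0 < α := lt_of_le_of_lt (by positivity) hα
  have hnum : 0 < α * m - M ^ 2 / 4 := by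
    have := (div_lt_iff₀ (by positivity : (0:ℝ) < 4 * m)).mp hα
    nlinarith
  have hden : 0 < α + m := by linarith
  set ρ := min m ((α * m - M ^ 2 / 4) / (α + m)) with hρdef
  have hρpos : 0 < ρ := lt_min hm (by positivity)
  have hρm : ρ < m := by
    have h : (α * m - M ^ 2 / 4) / (α + m) < m := by
      rw [div_lt_iff₀ hden]; nlinarith [sq_nonneg M]
    exact lt_of_le_of_lt (min_le_right _ _) h
  have hρα : ρ ≤ α := by
    have h : (α * m - M ^ 2 / 4) / (α + m) ≤ α := by
      rw [div_le_iff₀ hden]; nlinarith [sq_nonneg M]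
    exact le_trans (min_le_right _ _) h
  have hkey : ρ * (α + m) ≤ α * m - M ^ 2 / 4 := by
    have h := min_le_right m ((α * m - M ^ 2 / 4) / (α + m))
    calc ρ * (α + m) ≤ ((α * m - M ^ 2 / 4) / (α + m)) * (α + m) :=
          mul_le_mul_of_nonneg_right h hden.le
      _ = α * m - M ^ 2 / 4 := div_mul_cancel₀ _ hden.ne'
  have hM4 : M ^ 2 ≤ 4 * (α - ρ) * (m - ρ) := by nlinarith [sq_nonneg ρ]
  have hmρ : 0 < m - ρ := by linarith
  have key : ∀ x u v a1 b2 : ℝ, m ≤ a1 → b2 ^ 2 ≤ M ^ 2 →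
      α * x ^ 2 + α * u ^ 2 + v * (a1 * v + u * b2) ≥ ρ * (x ^ 2 + u ^ 2 + v ^ 2) := by
    intro x u v a1 b2 ha1 hb2sq
    nlinarith [sq_nonneg (2 * (m - ρ) * v + b2 * u),
      mul_nonneg (sub_nonneg.2 (hb2sq.trans hM4)) (sq_nonneg u),
      mul_nonneg (sub_nonneg.2 ha1) (sq_nonneg v),
      mul_nonneg (mul_nonneg (sub_nonneg.2 hρα) hmρ.le) (sq_nonneg x),
      hmρ, sq_nonneg x, sq_nonneg u, sq_nonneg v]
  refine ⟨ρ, hρpos, ?_⟩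
  rintro a ⟨ha1, ha2⟩ b ⟨hb1, hb2⟩
  have hb2' := abs_le.mp hb2
  have hb2sq : b 2 ^ 2 ≤ M ^ 2 := by nlinarith [hb2'.1, hb2'.2]
  have hk := key (a 0 - b 0) (a 1 - b 1) (a 2 - b 2) (a 1) (b 2) ha1 hb2sq
  simp [hW, Matrix.mulVec, dotProduct, Fin.sum_univ_three, Fin.sum_univ_four]
  nlinarith [hk]
end

section
/- (LS invariant) Suppose F : [0,∞) → ℝ^{4×4} and W̃ : [0,∞) → ℝ⁴ are differentiable, F(t) is invertible for all t, and they satisfy F' = −γ F φᵀ φ F and W̃' = −γ F φᵀ φ W̃ for a continuous φ : [0,∞) → ℝ^{2×4} and γ > 0. Then F(t)⁻¹ W̃(t) is constant; in particular, if F(0) = (1/f₀) I₄ then W̃(t) = f₀ F(t) W̃(0) for all t. -/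
/-!
If `F` and `W` solve the same linear equation `X' = B X` (here `B = -γ F φᵀ φ`), then
`F⁻¹ W` has zero right derivative on `[0, ∞)`, hence is constant. Rather than differentiating
the matrix inverse, write `F(y)⁻¹ W(y) - F(t)⁻¹ W(t) = F(y)⁻¹ g(y)` with
`g(y) = W(y) - F(y) F(t)⁻¹ W(t)`: `g` vanishes at `t` together with its derivative, and `F⁻¹` is
merely continuous at `t`.
-/

open Matrix Set Filter Topology

attribute [local instance] Matrix.normedAddCommGroup Matrix.normedSpace

section

variable {𝕜 : Type*} [NontriviallyNormedField 𝕜] {m n : Type*} [Fintype m] [Fintype n]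

theorem HasDerivAt.matrix_mulVec_const {F : 𝕜 → Matrix m n 𝕜} {F' : Matrix m n 𝕜} {x : 𝕜}
    (hF : HasDerivAt F F' x) (c : n → 𝕜) : HasDerivAt (fun y => F y *ᵥ c) (F' *ᵥ c) x :=
  let L : Matrix m n 𝕜 →L[𝕜] m → 𝕜 :=
    ⟨⟨⟨fun M => M *ᵥ c, fun M N => add_mulVec M N c⟩, fun a M => smul_mulVec a M c⟩,
      continuous_id.matrix_mulVec continuous_const⟩
  L.hasFDerivAt.comp_hasDerivAt x hF

theorem HasDerivWithinAt.matrix_mulVec_of_eq_zero {M : 𝕜 → Matrix m n 𝕜} {g : 𝕜 → n → 𝕜}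
    {s : Set 𝕜} {x : 𝕜} (hg : HasDerivWithinAt g 0 s x) (hgx : g x = 0)
    (hM : ContinuousWithinAt M s x) : HasDerivWithinAt (fun y => M y *ᵥ g y) 0 s x := by
  rw [hasDerivWithinAt_iff_tendsto_slope] at hg ⊢
  have hslope : slope (fun y => M y *ᵥ g y) x = fun y => M y *ᵥ slope g x y := by
    ext1 y
    simp only [slope_def_module, hgx, mulVec_zero, sub_zero, mulVec_smul]
  rw [hslope, ← mulVec_zero (M x)]
  exact (continuous_fst.matrix_mulVec continuous_snd).continuousAt.tendsto.comp
    ((hM.mono_left (nhdsWithin_mono _ sdiff_subset)).prodMk_nhds hg)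

end

section

variable {n : Type*} [Fintype n] [DecidableEq n] {F B : ℝ → Matrix n n ℝ} {W : ℝ → n → ℝ}

theorem hasDerivAt_sub_mulVec_inv_mulVec {t : ℝ} (hFt : IsUnit (F t))
    (hF : HasDerivAt F (B t * F t) t) (hW : HasDerivAt W (B t *ᵥ W t) t) :
    HasDerivAt (fun s => W s - F s *ᵥ ((F t)⁻¹ *ᵥ W t)) 0 t := by
  have h := hW.sub (hF.matrix_mulVec_const ((F t)⁻¹ *ᵥ W t))
  rwa [mulVec_mulVec, mul_assoc, mul_nonsing_inv _ ((isUnit_iff_isUnit_det _).mp hFt), mul_one,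
    sub_self] at h

theorem hasDerivWithinAt_inv_mulVec_zero {s : Set ℝ} {t : ℝ} (hFs : ∀ y ∈ s, IsUnit (F y))
    (ht : t ∈ s)     (hF : HasDerivAt F (B t * F t) t) (hW : HasDerivAt W (B t *ᵥ W t) t) :
    HasDerivWithinAt (fun y => (F y)⁻¹ *ᵥ W y) 0 s t := by
  have hdet : IsUnit (F t).det := (isUnit_iff_isUnit_det _).mp (hFs t ht)
  have hinv : ContinuousAt (fun y => (F y)⁻¹) t := by
    have hdet_inv : ContinuousAt Ring.inverse (F t).det := by
      simpa only [Ring.inverse_eq_inv'] using continuousAt_inv₀ hdet.ne_zero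
    exact (continuousAt_matrix_inv _ hdet_inv).comp hF.continuousAt
  have hg : HasDerivWithinAt (fun y => W y - F y *ᵥ ((F t)⁻¹ *ᵥ W t)) 0 s t :=
    (hasDerivAt_sub_mulVec_inv_mulVec (hFs t ht) hF hW).hasDerivWithinAt
  have hgt : W t - F t *ᵥ ((F t)⁻¹ *ᵥ W t) = 0 := by
    rw [mulVec_mulVec, mul_nonsing_inv _ hdet, one_mulVec, sub_self]
  refine ((hg.matrix_mulVec_of_eq_zero hgt hinv.continuousWithinAt).const_add
    ((F t)⁻¹ *ᵥ W t)).congr_of_mem (fun y hy => ?_) ht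
  rw [mulVec_sub, mulVec_mulVec _ (F y)⁻¹ (F y),
    nonsing_inv_mul _ ((isUnit_iff_isUnit_det _).mp (hFs y hy)), one_mulVec, add_sub_cancel]

theorem inv_mulVec_eq_of_hasDerivAt (hFinv : ∀ t ≥ 0, IsUnit (F t))
    (hF : ∀ t ≥ 0, HasDerivAt F (B t * F t) t) (hW : ∀ t ≥ 0, HasDerivAt W (B t *ᵥ W t) t) :
    ∀ t ≥ 0, (F t)⁻¹ *ᵥ W t = (F 0)⁻¹ *ᵥ W 0 := by
  have hu : ∀ x ∈ Ici (0 : ℝ), HasDerivWithinAt (fun y => (F y)⁻¹ *ᵥ W y) 0 (Ici 0) x :=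
    fun x hx => hasDerivWithinAt_inv_mulVec_zero hFinv hx (hF x hx) (hW x hx)
  intro t ht
  exact constant_of_has_deriv_right_zero
    (fun x hx => (hu x hx.1).continuousWithinAt.mono Icc_subset_Ici_self)
    (fun x hx => (hu x hx.1).mono (Ici_subset_Ici.2 hx.1)) t ⟨ht, le_rfl⟩

end

theorem ls_invariant_general (γ f0 : ℝ) (hf0 : 0 < f0)
    (φ : ℝ → Matrix (Fin 2) (Fin 4) ℝ)
    (F : ℝ → Matrix (Fin 4) (Fin 4) ℝ) (Wt : ℝ → Fin 4 → ℝ)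
    (hFinv : ∀ t ≥ 0, IsUnit (F t))
    (hF : ∀ t ≥ 0, HasDerivAt F (-(γ • (F t * (φ t)ᵀ * φ t * F t))) t)
    (hW : ∀ t ≥ 0, HasDerivAt Wt (-(γ • ((F t * (φ t)ᵀ * φ t).mulVec (Wt t)))) t) :
    (∀ t ≥ 0, (F t)⁻¹.mulVec (Wt t) = (F 0)⁻¹.mulVec (Wt 0)) ∧
    (F 0 = (1 / f0) • 1 → ∀ t ≥ 0, Wt t = f0 • (F t).mulVec (Wt 0)) := by
  set B : ℝ → Matrix (Fin 4) (Fin 4) ℝ := fun t => -(γ • (F t * (φ t)ᵀ * φ t))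
  have hconst : ∀ t ≥ 0, (F t)⁻¹ *ᵥ Wt t = (F 0)⁻¹ *ᵥ Wt 0 :=
    inv_mulVec_eq_of_hasDerivAt (B := B) hFinv
      (fun t ht => by simpa [B, neg_mul, smul_mul_assoc] using hF t ht)
      (fun t ht => by simpa [B, neg_mulVec, smul_mulVec] using hW t ht)
  refine ⟨hconst, fun hF0 t ht => ?_⟩
  have hF0inv : (F 0)⁻¹ = f0 • 1 := by
    rw [hF0]
    refine inv_eq_left_inv ?_
    rw [smul_mul_smul_comm, one_mul, mul_one_div_cancel hf0.ne', one_smul]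
  have hWt : Wt t = F t *ᵥ ((F t)⁻¹ *ᵥ Wt t) := by
    rw [mulVec_mulVec, mul_nonsing_inv _ ((isUnit_iff_isUnit_det _).mp (hFinv t ht)), one_mulVec]
  rw [hWt, hconst t ht, hF0inv, smul_mulVec, one_mulVec, mulVec_smul]

theorem ls_invariant (γ f0 : ℝ) (hγ : 0 < γ) (hf0 : 0 < f0)
    (φ : ℝ → Matrix (Fin 2) (Fin 4) ℝ) (hφ : Continuous φ)
    (F : ℝ → Matrix (Fin 4) (Fin 4) ℝ) (Wt : ℝ → Fin 4 → ℝ)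
    (hFinv : ∀ t ≥ 0, IsUnit (F t))
    (hF : ∀ t ≥ 0, HasDerivAt F (-(γ • (F t * (φ t)ᵀ * φ t * F t))) t)
    (hW : ∀ t ≥ 0, HasDerivAt Wt (-(γ • ((F t * (φ t)ᵀ * φ t).mulVec (Wt t)))) t) :
    (∀ t ≥ 0, (F t)⁻¹.mulVec (Wt t) = (F 0)⁻¹.mulVec (Wt 0)) ∧
    (F 0 = (1 / f0) • 1 → ∀ t ≥ 0, Wt t = f0 • (F t).mulVec (Wt 0)) :=
  ls_invariant_general γ f0 hf0 φ F Wt hFinv hF hW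
end

section
/- If z : [0,∞) → ℝ is a solution of z' = −z³(θ_1 z − θ_2)e^{−θ_3 z} with θ_1, θ_2, θ_3 > 0 and z(0) > 0, then z(t) > 0 for all t ≥ 0, z is bounded, and z(t) → θ_2/θ_1 as t → ∞. -/
/-!
Two barrier arguments trap the solution between `min (z 0) c` and `max (z 0) c`, where
`c = θ₂ / θ₁` is the only positive zero of the right-hand side; in particular `z` stays positive
and bounded. On that interval the right-hand side has the sign of `c - z 0`, so `z` is monotone,
hence convergent, and a limit of a solution of an autonomous equation must be an equilibrium,
which forces the limit to be `c`.
-/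

open Real Set Filter Topology

section Barrier

variable {z z' : ℝ → ℝ} {a b : ℝ}

/-- Only a window `(b, a)` above the barrier `b` needs `z' ≤ 0`: by continuity, right after its
last time `s` in `(-∞, b]` the solution lies in this window. -/
theorem le_of_hasDerivAt_nonpos_above (hba : b < a) (hz : ∀ t ≥ 0, HasDerivAt z (z' t) t)
    (h0 : z 0 ≤ b) (hz' : ∀ t ≥ 0, b < z t → z t < a → z' t ≤ 0) : ∀ t ≥ 0, z t ≤ b := by
  intro t ht
  by_contra! hbt
  have hcont : ContinuousOn z (Ici 0) := fun u hu => (hz u hu).continuousAt.continuousWithinAt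
  have hclosed : IsClosed (Icc 0 t ∩ z ⁻¹' Iic b) :=
    (hcont.mono Icc_subset_Ici_self).preimage_isClosed_of_isClosed isClosed_Icc isClosed_Iic
  have hbdd : BddAbove (Icc 0 t ∩ z ⁻¹' Iic b) := ⟨t, fun u hu => hu.1.2⟩
  set s := sSup (Icc 0 t ∩ z ⁻¹' Iic b)
  have hs : s ∈ Icc 0 t ∩ z ⁻¹' Iic b := hclosed.csSup_mem ⟨0, ⟨le_rfl, ht⟩, h0⟩ hbdd
  obtain ⟨⟨hs0, hst_le⟩, hzs : z s ≤ b⟩ := hs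
  have hst : s < t := hst_le.lt_of_ne fun h => hbt.not_ge (h ▸ hzs)
  have habove : ∀ u ∈ Ioc s t, b < z u := fun u hu => by
    by_contra! hub
    exact hu.1.not_ge (le_csSup hbdd ⟨⟨hs0.trans hu.1.le, hu.2⟩, hub⟩)
  have hnear : ∀ᶠ u in 𝓝[>] s, z u < a :=
    nhdsWithin_le_nhds <| (hz s hs0).continuousAt.eventually (gt_mem_nhds (hzs.trans_lt hba))
  obtain ⟨r, hsr, hr⟩ := mem_nhdsGT_iff_exists_Ioc_subset.1 hnear
  have hsr' : s < min r t := lt_min hsr hst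
  obtain ⟨ξ, hξ, hslope⟩ := exists_hasDerivAt_eq_slope z z' hsr'
    (hcont.mono fun u hu => hs0.trans hu.1) fun u hu => hz u (hs0.trans hu.1.le)
  have hξ_nonpos : z' ξ ≤ 0 :=
    hz' ξ (hs0.trans hξ.1.le) (habove ξ ⟨hξ.1, hξ.2.le.trans (min_le_right _ _)⟩)
      (hr ⟨hξ.1, hξ.2.le.trans (min_le_left _ _)⟩)
  have hslope_pos : 0 < (z (min r t) - z s) / (min r t - s) :=
    div_pos (by linarith [habove (min r t) ⟨hsr', min_le_right _ _⟩]) (sub_pos.2 hsr')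
  linarith

theorem ge_of_hasDerivAt_nonneg_below (hab : a < b) (hz : ∀ t ≥ 0, HasDerivAt z (z' t) t)
    (h0 : b ≤ z 0) (hz' : ∀ t ≥ 0, a < z t → z t < b → 0 ≤ z' t) : ∀ t ≥ 0, b ≤ z t := by
  have h := le_of_hasDerivAt_nonpos_above (z := fun t => -z t) (z' := fun t => -z' t)
    (neg_lt_neg hab) (fun t ht => (hz t ht).neg) (neg_le_neg h0)
    fun t ht h1 h2 => neg_nonpos.2 (hz' t ht (neg_lt_neg_iff.1 h2) (neg_lt_neg_iff.1 h1))
  exact fun t ht => neg_le_neg_iff.1 (h t ht)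

end Barrier

section Limit

variable {z z' : ℝ → ℝ} {b : ℝ}

theorem exists_tendsto_of_monotoneOn_Ici (hmono : MonotoneOn z (Ici 0))
    (hb : ∀ t ≥ 0, z t ≤ b) : ∃ L, Tendsto z atTop (𝓝 L) := by
  have hg : Monotone fun t => z (max t 0) := fun u v huv =>
    hmono (le_max_right u 0) (le_max_right v 0) (max_le_max_right 0 huv)
  refine ⟨_, (tendsto_atTop_ciSup hg ⟨b, ?_⟩).congr' ?_⟩
  · rintro _ ⟨t, rfl⟩
    exact hb _ (le_max_right t 0)
  · filter_upwards [eventually_ge_atTop 0] with t ht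
    rw [max_eq_left ht]

theorem exists_tendsto_of_hasDerivAt_nonneg (hz : ∀ t ≥ 0, HasDerivAt z (z' t) t)
    (hz' : ∀ t ≥ 0, 0 ≤ z' t) (hb : ∀ t ≥ 0, z t ≤ b) : ∃ L, Tendsto z atTop (𝓝 L) := by
  refine exists_tendsto_of_monotoneOn_Ici ?_ hb
  refine monotoneOn_of_hasDerivWithinAt_nonneg (f' := z') (convex_Ici 0)
    (fun u hu => (hz u hu).continuousAt.continuousWithinAt) (fun u hu => ?_) fun u hu => ?_
  all_goals rw [interior_Ici] at hu
  · exact (hz u hu.le).hasDerivWithinAt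
  · exact hz' u hu.le

theorem exists_tendsto_of_hasDerivAt_nonpos (hz : ∀ t ≥ 0, HasDerivAt z (z' t) t)
    (hz' : ∀ t ≥ 0, z' t ≤ 0) (hb : ∀ t ≥ 0, b ≤ z t) : ∃ L, Tendsto z atTop (𝓝 L) := by
  obtain ⟨L, hL⟩ := exists_tendsto_of_hasDerivAt_nonneg (z := -z) (z' := -z') (b := -b)
    (fun t ht => (hz t ht).neg) (fun t ht => neg_nonneg.2 (hz' t ht))
    fun t ht => neg_le_neg (hb t ht)
  exact ⟨-L, by simpa using hL.neg⟩

/-- By the mean value theorem `z (n + 1) - z n = f (z ξₙ)` with `ξₙ ∈ (n, n + 1)`; the left side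
tends to `L - L` and the right side to `f L`. -/
theorem eq_zero_of_tendsto_of_hasDerivAt {f : ℝ → ℝ} {L : ℝ} (hf : ContinuousAt f L)
    (hz : ∀ t ≥ 0, HasDerivAt z (f (z t)) t) (hL : Tendsto z atTop (𝓝 L)) : f L = 0 := by
  have hmvt (n : ℕ) : ∃ ξ ∈ Ioo (n : ℝ) (n + 1), f (z ξ) = (z (n + 1) - z n) / (n + 1 - n) :=
    exists_hasDerivAt_eq_slope z (f ∘ z) (lt_add_one (n : ℝ))
      (fun u hu => (hz u (n.cast_nonneg.trans hu.1)).continuousAt.continuousWithinAt)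
      fun u hu => hz u (n.cast_nonneg.trans hu.1.le)
  choose ξ hξ hslope using hmvt
  have hξ_top : Tendsto ξ atTop atTop :=
    tendsto_atTop_mono (fun n => (hξ n).1.le) tendsto_natCast_atTop_atTop
  have hdiff : Tendsto (fun n : ℕ => z (n + 1) - z n) atTop (𝓝 (L - L)) :=
    (hL.comp (tendsto_atTop_add_const_right _ 1 tendsto_natCast_atTop_atTop)).sub
      (hL.comp tendsto_natCast_atTop_atTop)
  refine tendsto_nhds_unique ((hf.tendsto.comp hL).comp hξ_top) ?_
  simpa [Function.comp_def, hslope] using hdiff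

end Limit

namespace CubicExpODE

variable {θ₁ θ₂ θ₃ x : ℝ}

noncomputable def rhs (θ₁ θ₂ θ₃ x : ℝ) : ℝ := -x ^ 3 * (θ₁ * x - θ₂) * exp (-θ₃ * x)

theorem continuous_rhs : Continuous (rhs θ₁ θ₂ θ₃) := by
  unfold rhs
  fun_prop

theorem rhs_eq (hθ₁ : θ₁ ≠ 0) : rhs θ₁ θ₂ θ₃ x = θ₁ * x ^ 3 * (θ₂ / θ₁ - x) * exp (-θ₃ * x) := by
  unfold rhs
  field_simp
  ring

theorem rhs_nonneg (hθ₁ : 0 < θ₁) (hx : 0 ≤ x) (hxc : x ≤ θ₂ / θ₁) : 0 ≤ rhs θ₁ θ₂ θ₃ x := by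
  rw [rhs_eq hθ₁.ne']
  have := sub_nonneg.2 hxc
  positivity

theorem rhs_nonpos (hθ₁ : 0 < θ₁) (hx : 0 ≤ x) (hxc : θ₂ / θ₁ ≤ x) : rhs θ₁ θ₂ θ₃ x ≤ 0 := by
  rw [rhs_eq hθ₁.ne']
  exact mul_nonpos_of_nonpos_of_nonneg
    (mul_nonpos_of_nonneg_of_nonpos (by positivity) (sub_nonpos.2 hxc)) (exp_pos _).le

theorem eq_of_rhs_eq_zero (hθ₁ : θ₁ ≠ 0) (hx : 0 < x) (h : rhs θ₁ θ₂ θ₃ x = 0) :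
    x = θ₂ / θ₁ := by
  rw [rhs_eq hθ₁] at h
  have := (exp_pos (-θ₃ * x)).ne'
  have := pow_ne_zero 3 hx.ne'
  simp_all [sub_eq_zero, eq_comm]

end CubicExpODE

open CubicExpODE

open Real in
theorem solution_convergence_general (θ1 θ2 θ3 : ℝ) (hθ1 : 0 < θ1) (hθ2 : 0 < θ2)
    (z : ℝ → ℝ)
    (hz : ∀ t ≥ 0, HasDerivAt z (-(z t) ^ 3 * (θ1 * z t - θ2) * exp (-θ3 * z t)) t)
    (hz0 : 0 < z 0) :
    (∀ t ≥ 0, 0 < z t) ∧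
    (∃ B, ∀ t ≥ 0, |z t| ≤ B) ∧
    Filter.Tendsto z Filter.atTop (nhds (θ2 / θ1)) := by
  have hz : ∀ t ≥ 0, HasDerivAt z (rhs θ1 θ2 θ3 (z t)) t := hz
  have hm : 0 < min (z 0) (θ2 / θ1) := lt_min hz0 (div_pos hθ2 hθ1)
  have hlow : ∀ t ≥ 0, min (z 0) (θ2 / θ1) ≤ z t :=
    ge_of_hasDerivAt_nonneg_below hm hz (min_le_left _ _)
      fun t _ hzt hzm => rhs_nonneg hθ1 hzt.le (hzm.le.trans (min_le_right _ _))
  have hupp : ∀ t ≥ 0, z t ≤ max (z 0) (θ2 / θ1) :=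
    le_of_hasDerivAt_nonpos_above (lt_add_one _) hz (le_max_left _ _)
      fun t _ hMz _ => rhs_nonpos hθ1 (hm.le.trans (min_le_max.trans hMz.le))
        ((le_max_right _ _).trans hMz.le)
  have hpos : ∀ t ≥ 0, 0 < z t := fun t ht => hm.trans_le (hlow t ht)
  refine ⟨hpos, ⟨_, fun t ht => abs_le.2 ⟨?_, hupp t ht⟩⟩, ?_⟩
  · linarith [hpos t ht, hupp t ht]
  obtain ⟨L, hL⟩ : ∃ L, Tendsto z atTop (𝓝 L) := by
    rcases le_total (z 0) (θ2 / θ1) with h | h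
    · exact exists_tendsto_of_hasDerivAt_nonneg hz
        (fun t ht => rhs_nonneg hθ1 (hpos t ht).le (max_eq_right h ▸ hupp t ht)) hupp
    · exact exists_tendsto_of_hasDerivAt_nonpos hz
        (fun t ht => rhs_nonpos hθ1 (hpos t ht).le (min_eq_right h ▸ hlow t ht)) hlow
  have hL0 : 0 < L := hm.trans_le (ge_of_tendsto hL (eventually_atTop.2 ⟨0, hlow⟩))
  rwa [← eq_of_rhs_eq_zero hθ1.ne' hL0
    (eq_zero_of_tendsto_of_hasDerivAt continuous_rhs.continuousAt hz hL)]

open Real in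
theorem solution_convergence (θ1 θ2 θ3 : ℝ) (hθ1 : 0 < θ1) (hθ2 : 0 < θ2) (hθ3 : 0 < θ3)
    (z : ℝ → ℝ)
    (hz : ∀ t ≥ 0, HasDerivAt z (-(z t) ^ 3 * (θ1 * z t - θ2) * exp (-θ3 * z t)) t)
    (hz0 : 0 < z 0) :
    (∀ t ≥ 0, 0 < z t) ∧
    (∃ B, ∀ t ≥ 0, |z t| ≤ B) ∧
    Filter.Tendsto z Filter.atTop (nhds (θ2 / θ1)) :=
  solution_convergence_general θ1 θ2 θ3 hθ1 hθ2 z hz hz0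
end
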